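/- Let ρ, θ > 0, u ∈ ℝ³, q ∈ ℝ³, and let f_M(ξ) = ρ (2πθ)^{−3/2} exp(−|ξ−u|²/(2θ)) be the local Maxwellian. Then for all ξ ∈ ℝ³, with v = (ξ−u)/√θ and e_i the standard basis multi-indices, the Shakhov non-equilibrium correction admits the exact Hermite expansion ((ξ−u)·q)/(5ρθ²) · (|ξ−u|²/θ − 5) · f_M(ξ) = (1/5) Σ_{i=1}^3 Σ_{j=1}^3 q_i H_{θ, e_i + 2e_j}(v). -/

import Mathlib

open MeasureTheory Real

/-- Probabilists' Hermite polynomial `He n x`, with the convention `He n ≡ 0` for `n < 0`. -/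
noncomputable def He (n : ℤ) (x : ℝ) : ℝ :=
  if n < 0 then 0 else Polynomial.aeval x (Polynomial.hermite n.toNat)

/-- The Hermite basis function
`H_{θ,α}(v) = ∏_{d=1}^3 (2π)^{−1/2} θ^{−(α_d+1)/2} He_{α_d}(v_d) e^{−v_d²/2}`. -/
noncomputable def Hb (θ : ℝ) (α : Fin 3 → ℕ) (v : Fin 3 → ℝ) : ℝ :=
  ∏ d, (2 * Real.pi) ^ (-(1 / 2 : ℝ)) * θ ^ (-(((α d : ℝ) + 1) / 2)) *
    He (α d) (v d) * Real.exp (-(v d) ^ 2 / 2)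

/-- `C_{θ,α} = (2π)^{3/2} θ^{|α|+3}/(α₁! α₂! α₃!)`. -/
noncomputable def Cc (θ : ℝ) (α : Fin 3 → ℕ) : ℝ :=
  (2 * Real.pi) ^ ((3 : ℝ) / 2) * θ ^ (α 0 + α 1 + α 2 + 3) /
    ((Nat.factorial (α 0)) * (Nat.factorial (α 1)) * (Nat.factorial (α 2)))

/-!
`H_{θ,α}(v)` factors as `(2π)^{-3/2} θ^{-(|α|+3)/2} He_α(v) e^{-|v|²/2}`, and `|e_i + 2e_j| = 3`.
Summing over `j`, `He_3(v_i) + Σ_{j ≠ i} v_i He_2(v_j) = v_i (|v|² - 5)`, which is exactly the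
polynomial factor of the Shakhov correction once `v = (ξ - u)/√θ`.
-/

open Polynomial in
lemma He_natCast (n : ℕ) (x : ℝ) : He n x = aeval x (hermite n) := by
  simp [He]

lemma He_zero (x : ℝ) : He 0 x = 1 := by
  rw [show (0 : ℤ) = (0 : ℕ) from rfl, He_natCast]
  simp

lemma He_one (x : ℝ) : He 1 x = x := by
  rw [show (1 : ℤ) = (1 : ℕ) from rfl, He_natCast]
  simp

open Polynomial in
lemma He_two (x : ℝ) : He 2 x = x ^ 2 - 1 := by
  rw [show (2 : ℤ) = (2 : ℕ) from rfl, He_natCast]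
  simp [hermite_succ, sq]

open Polynomial in
lemma He_three (x : ℝ) : He 3 x = x ^ 3 - 3 * x := by
  rw [show (3 : ℤ) = (3 : ℕ) from rfl, He_natCast]
  simp [hermite_succ]
  ring

lemma Hb_eq_mul_prod_He {θ : ℝ} (hθ : 0 < θ) (α : Fin 3 → ℕ) (v : Fin 3 → ℝ) :
    Hb θ α v = (2 * π) ^ (-(3 / 2 : ℝ)) * θ ^ (-((∑ d, (α d : ℝ)) + 3) / 2) *
      (∏ d, He (α d) (v d)) * exp (-(∑ d, v d ^ 2) / 2) := by
  simp only [Hb, Finset.prod_mul_distrib, Finset.prod_const, Finset.card_univ, Fintype.card_fin,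
    ← rpow_sum_of_pos hθ, ← exp_sum, ← rpow_mul_natCast (by positivity : (0 : ℝ) ≤ 2 * π)]
  congr 3
  · norm_num
  · rw [Finset.sum_neg_distrib, ← Finset.sum_div, Finset.sum_add_distrib]
    simp only [Finset.sum_const, Finset.card_univ, Fintype.card_fin, nsmul_eq_mul]
    congr 1
    push_cast
    ring
  · rw [← Finset.sum_div, Finset.sum_neg_distrib]

lemma sum_e_add_two_e_eq_three (i j : Fin 3) :
    ∑ d, (((if d = i then 1 else 0) + (if d = j then 2 else 0) : ℕ) : ℝ) = 3 := by
  simp [Finset.sum_add_distrib]; norm_num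

lemma sum_prod_He_e_add_two_e (i : Fin 3) (v : Fin 3 → ℝ) :
    ∑ j, ∏ d, He ((if d = i then 1 else 0) + (if d = j then 2 else 0) : ℕ) (v d)
      = v i * (∑ d, v d ^ 2 - 5) := by
  fin_cases i <;>
    simp [Fin.sum_univ_three, Fin.prod_univ_three, He_zero, He_one, He_two, He_three] <;> ring

lemma sum_Hb_e_add_two_e {θ : ℝ} (hθ : 0 < θ) (i : Fin 3) (v : Fin 3 → ℝ) :
    ∑ j, Hb θ (fun d => (if d = i then 1 else 0) + (if d = j then 2 else 0)) v
      = (2 * π) ^ (-(3 / 2 : ℝ)) * (θ ^ 3)⁻¹ * v i * (∑ d, v d ^ 2 - 5) *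
          exp (-(∑ d, v d ^ 2) / 2) := by
  simp_rw [Hb_eq_mul_prod_He hθ, sum_e_add_two_e_eq_three, ← Finset.sum_mul, ← Finset.mul_sum,
    sum_prod_He_e_add_two_e]
  rw [show (-((3 : ℝ) + 3) / 2) = -((3 : ℕ) : ℝ) by norm_num, rpow_neg hθ.le,
    rpow_natCast]
  ring

/-- The Shakhov non-equilibrium correction admits the exact Hermite expansion
`((ξ−u)·q)/(5ρθ²) (|ξ−u|²/θ − 5) f_M(ξ) = (1/5) Σ_{i,j} q_i H_{θ,e_i+2e_j}((ξ−u)/√θ)`. -/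
theorem shakhov_correction_expansion (ρ θ : ℝ) (hρ : 0 < ρ) (hθ : 0 < θ)
    (u q : Fin 3 → ℝ) (ξ : Fin 3 → ℝ) :
    ((∑ d, (ξ d - u d) * q d) / (5 * ρ * θ ^ 2)) *
        ((∑ d, (ξ d - u d) ^ 2) / θ - 5) *
        (ρ * (2 * Real.pi * θ) ^ (-(3 : ℝ) / 2) *
          Real.exp (-(∑ d, (ξ d - u d) ^ 2) / (2 * θ)))
      = (1 / 5) * ∑ i : Fin 3, ∑ j : Fin 3, q i *
          Hb θ (fun d => (if d = i then 1 else 0) + (if d = j then 2 else 0))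
            (fun d => (ξ d - u d) / Real.sqrt θ) := by
  obtain ⟨s, hs, rfl⟩ : ∃ s : ℝ, 0 < s ∧ s ^ 2 = θ :=
    ⟨√θ, sqrt_pos.mpr hθ, sq_sqrt hθ.le⟩
  have h_maxwellian_const :
      (2 * π * s ^ 2) ^ (-(3 : ℝ) / 2) = (2 * π) ^ (-(3 / 2 : ℝ)) * (s ^ 3)⁻¹ := by
    rw [mul_rpow (by positivity) (by positivity), ← rpow_natCast s 2,
      ← rpow_mul hs.le, neg_div]
    norm_num [rpow_neg hs.le]
  have h_norm_sq : ∑ d, ((ξ d - u d) / s) ^ 2 = (∑ d, (ξ d - u d) ^ 2) / s ^ 2 := by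
    simp_rw [div_pow, Finset.sum_div]
  simp_rw [← Finset.mul_sum, sum_Hb_e_add_two_e (pow_pos hs 2), sqrt_sq hs.le, h_norm_sq,
    h_maxwellian_const, neg_div, div_div, mul_comm (2 : ℝ) (s ^ 2)]
  simp only [Fin.sum_univ_three]
  field_simp
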